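/- arXiv:1607.08567 — 3 statements merged into one kernel-verified Lean document; each statement's English description precedes it below -/
import Mathlib

section
/- The operators U^m and S_r respect the module structure of M over R: for all m, n ∈ M and r, s ∈ R⁰, one has U^{m+n} ∘ S_r = S_r ∘ U^{r•m} ∘ U^{r•n}, and if moreover r + s ≠ 0 then U^m ∘ S_{r+s} = S_{r+s} ∘ U^{r•m} ∘ U^{s•m}. -/
open scoped ENNReal nonZeroDivisors

/-!
Both operators come from maps of the index set `M × R⁰`: `U^k` is composition with the bijection
`(n, t) ↦ (n - t • k, t)` and `S_r` is extension by zero along the injection `(n, t) ↦ (n, r t)`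
(injective because `r` is a non-zero-divisor). For `p < ∞`, composition with a bijection and
extension by zero along an injection are isometries of `ℓᵖ`, and they intertwine whenever the
underlying index maps do. Both identities then reduce to
`shift k ∘ dilate r = dilate r ∘ shift (r • k)`, i.e. `(r t) • k = t • (r • k)`, together with
`shift a ∘ shift b = shift (a + b)` and the distributivity of the scalar action.
-/

theorem Function.Injective.comp_extend_zero {α β γ δ : Type*} [Zero γ] [Zero δ] {f : α → β}
    (hf : f.Injective) {φ : γ → δ} (hφ : φ 0 = 0) (g : α → γ) :
    φ ∘ Function.extend f g 0 = Function.extend f (φ ∘ g) 0 := by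
  funext j
  by_cases hj : ∃ i, f i = j
  · obtain ⟨i, rfl⟩ := hj
    simp [hf.extend_apply]
  · simp [Function.extend_apply' _ _ _ hj, hφ]

namespace lp

variable {𝕜 E ι κ : Type*} [NormedAddCommGroup E] {p : ℝ≥0∞}

theorem memℓp_comp_equiv_iff (hp : 0 < p.toReal) (e : ι ≃ κ) {f : κ → E} :
    Memℓp (f ∘ e) p ↔ Memℓp f p := by
  simp only [memℓp_gen_iff hp]
  exact e.summable_iff (f := fun j => ‖f j‖ ^ p.toReal)

theorem memℓp_extend_zero_iff (hp : 0 < p.toReal) {f : ι → κ} (hf : f.Injective) {g : ι → E} :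
    Memℓp (Function.extend f g 0) p ↔ Memℓp g p := by
  simp only [memℓp_gen_iff hp]
  rw [← Function.comp_def (fun v : E => ‖v‖ ^ p.toReal),
    hf.comp_extend_zero (by simp [Real.zero_rpow hp.ne']), summable_extend_zero hf]
  rfl

variable [NormedRing 𝕜] [Module 𝕜 E] [IsBoundedSMul 𝕜 E] [Fact (1 ≤ p)]

private theorem toReal_pos_of_ne_top (hp : p ≠ ∞) : 0 < p.toReal :=
  ENNReal.toReal_pos (zero_lt_one.trans_le Fact.out).ne' hp

variable (𝕜) in
noncomputable def compEquiv (hp : p ≠ ∞) (e : ι ≃ κ) :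
    lp (fun _ : κ => E) p ≃ₗᵢ[𝕜] lp (fun _ : ι => E) p where
  toFun x := ⟨x ∘ e, (memℓp_comp_equiv_iff (toReal_pos_of_ne_top hp) e).2 x.2⟩
  invFun x := ⟨x ∘ e.symm, (memℓp_comp_equiv_iff (toReal_pos_of_ne_top hp) e.symm).2 x.2⟩
  left_inv x := lp.ext <| funext fun j => by simp
  right_inv x := lp.ext <| funext fun j => by simp
  map_add' x y := rfl
  map_smul' c x := rfl
  norm_map' x := by
    simp only [LinearEquiv.coe_mk, lp.norm_eq_tsum_rpow (toReal_pos_of_ne_top hp)]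
    congr 1
    exact e.tsum_eq (fun j => ‖x j‖ ^ p.toReal)

@[simp]
theorem compEquiv_apply (hp : p ≠ ∞) (e : ι ≃ κ) (x : lp (fun _ : κ => E) p) (i : ι) :
    compEquiv 𝕜 hp e x i = x (e i) :=
  rfl

variable (𝕜) in
noncomputable def extendZero (hp : p ≠ ∞) {f : ι → κ} (hf : f.Injective) :
    lp (fun _ : ι => E) p →ₗᵢ[𝕜] lp (fun _ : κ => E) p where
  toFun x := ⟨Function.extend f x 0, (memℓp_extend_zero_iff (toReal_pos_of_ne_top hp) hf).2 x.2⟩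
  map_add' x y := lp.ext <| by
    simp only [lp.coeFn_add]
    convert Function.extend_add f x y 0 0 using 2
    simp
  map_smul' c x := lp.ext <| by
    simpa using Function.extend_smul c f x 0
  norm_map' x := by
    simp only [LinearMap.coe_mk, AddHom.coe_mk, lp.norm_eq_tsum_rpow (toReal_pos_of_ne_top hp)]
    rw [← Function.comp_def (fun v : E => ‖v‖ ^ p.toReal),
      hf.comp_extend_zero (by simp [Real.zero_rpow (toReal_pos_of_ne_top hp).ne']),
      tsum_extend_zero hf]
    rfl

@[simp]
theorem extendZero_apply_self (hp : p ≠ ∞) {f : ι → κ} (hf : f.Injective)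
    (x : lp (fun _ : ι => E) p) (i : ι) : extendZero 𝕜 hp hf x (f i) = x i :=
  hf.extend_apply _ _ _

theorem extendZero_apply_of_notMem_range (hp : p ≠ ∞) {f : ι → κ} (hf : f.Injective)
    (x : lp (fun _ : ι => E) p) {j : κ} (hj : j ∉ Set.range f) : extendZero 𝕜 hp hf x j = 0 :=
  Function.extend_apply' _ _ _ hj

theorem compEquiv_compEquiv {ν : Type*} (hp : p ≠ ∞) (e : ι ≃ κ) (e' : κ ≃ ν)
    (x : lp (fun _ : ν => E) p) :
    compEquiv 𝕜 hp e (compEquiv 𝕜 hp e' x) = compEquiv 𝕜 hp (e.trans e') x :=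
  rfl

theorem compEquiv_extendZero {ι' κ' : Type*} (hp : p ≠ ∞) {f : ι → κ} (hf : f.Injective)
    {f' : ι' → κ'} (hf' : f'.Injective) (e : κ' ≃ κ) (e' : ι' ≃ ι) (h : ∀ i, e (f' i) = f (e' i))
    (x : lp (fun _ : ι => E) p) :
    compEquiv 𝕜 hp e (extendZero 𝕜 hp hf x) = extendZero 𝕜 hp hf' (compEquiv 𝕜 hp e' x) := by
  refine lp.ext <| funext fun j => ?_
  by_cases hj : j ∈ Set.range f'
  · obtain ⟨i, rfl⟩ := hj
    simp [h]
  · have hej : e j ∉ Set.range f := by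
      rintro ⟨i, hi⟩
      refine hj ⟨e'.symm i, e.injective ?_⟩
      simp [h, hi]
    rw [compEquiv_apply, extendZero_apply_of_notMem_range _ _ _ hej,
      extendZero_apply_of_notMem_range _ _ _ hj]

end lp

namespace Fock

variable {R M : Type*} [CommRing R]

def dilate (r : R⁰) (p : M × R⁰) : M × R⁰ :=
  (p.1, r * p.2)

theorem dilate_injective (r : R⁰) : (dilate r : M × R⁰ → M × R⁰).Injective := by
  rintro ⟨n, t⟩ ⟨n', t'⟩ h
  simp only [dilate, Prod.mk.injEq] at h
  exact Prod.ext h.1 <| Subtype.ext <|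
    (isRegular_iff_mem_nonZeroDivisors.2 r.2).left (congrArg Subtype.val h.2)

theorem mem_range_dilate_iff {r : R⁰} {p : M × R⁰} :
    p ∈ Set.range (dilate r) ↔ ∃ t : R⁰, (p.2 : R) = r * t := by
  constructor
  · rintro ⟨⟨n, t⟩, rfl⟩
    exact ⟨t, rfl⟩
  · rintro ⟨t, ht⟩
    exact ⟨(p.1, t), Prod.ext rfl (Subtype.ext ht.symm)⟩

variable [AddCommGroup M] [Module R M]

def shift (k : M) : M × R⁰ ≃ M × R⁰ where
  toFun p := (p.1 - (p.2 : R) • k, p.2)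
  invFun p := (p.1 + (p.2 : R) • k, p.2)
  left_inv p := by simp
  right_inv p := by simp

@[simp]
theorem shift_apply (k : M) (p : M × R⁰) : shift k p = (p.1 - (p.2 : R) • k, p.2) :=
  rfl

theorem shift_trans_shift (a b : M) : (shift a).trans (shift b) = shift (R := R) (a + b) :=
  Equiv.ext fun p => by simp [smul_add, sub_sub]

theorem shift_dilate (k : M) (r : R⁰) (p : M × R⁰) :
    shift k (dilate r p) = dilate r (shift ((r : R) • k) p) := by
  simp [dilate, smul_smul, mul_comm]

end Fock

open Fock in
/-- The operators `U^m` and `S_r` respect the module structure of `M` over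
`R`: for all `m, n ∈ M` and `r, s ∈ R⁰`, one has
`U^{m+n} ∘ S_r = S_r ∘ U^{r•m} ∘ U^{r•n}`, and if moreover `r + s ≠ 0` then
`U^m ∘ S_{r+s} = S_{r+s} ∘ U^{r•m} ∘ U^{s•m}`. -/
theorem fock_respects_module_structure
    {R : Type} [CommRing R] [IsDomain R] {M : Type} [AddCommGroup M] [Module R M] :
    ∃ (U : M → (lp (fun _ : M × (nonZeroDivisors R) => ℂ) 2 ≃ₗᵢ[ℂ]
                lp (fun _ : M × (nonZeroDivisors R) => ℂ) 2))
      (S : nonZeroDivisors R → (lp (fun _ : M × (nonZeroDivisors R) => ℂ) 2 →ₗᵢ[ℂ]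
                                lp (fun _ : M × (nonZeroDivisors R) => ℂ) 2)),
      -- `U k` is the operator `U^k`
      (∀ (k : M) (x : lp (fun _ : M × (nonZeroDivisors R) => ℂ) 2) (n : M)
          (t : nonZeroDivisors R),
        U k x (n, t) = x (n - (t : R) • k, t)) ∧
      -- `S r` is the operator `S_r`
      (∀ (r : nonZeroDivisors R) (x : lp (fun _ : M × (nonZeroDivisors R) => ℂ) 2)
          (n : M) (t : nonZeroDivisors R),
        S r x (n, r * t) = x (n, t)) ∧
      (∀ (r : nonZeroDivisors R) (x : lp (fun _ : M × (nonZeroDivisors R) => ℂ) 2)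
          (n : M) (s : nonZeroDivisors R),
        (¬ ∃ t : nonZeroDivisors R, (s : R) = (r : R) * (t : R)) → S r x (n, s) = 0) ∧
      -- `U^{m+n} ∘ S_r = S_r ∘ U^{r•m} ∘ U^{r•n}`
      (∀ (m n : M) (r : nonZeroDivisors R)
          (x : lp (fun _ : M × (nonZeroDivisors R) => ℂ) 2),
        U (m + n) (S r x) = S r (U ((r : R) • m) (U ((r : R) • n) x))) ∧
      -- if `r + s ≠ 0` then `U^m ∘ S_{r+s} = S_{r+s} ∘ U^{r•m} ∘ U^{s•m}`
      (∀ (m : M) (r s : nonZeroDivisors R) (h : (r : R) + (s : R) ≠ 0)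
          (x : lp (fun _ : M × (nonZeroDivisors R) => ℂ) 2),
        U m (S ⟨(r : R) + (s : R), mem_nonZeroDivisors_of_ne_zero h⟩ x) =
          S ⟨(r : R) + (s : R), mem_nonZeroDivisors_of_ne_zero h⟩
            (U ((r : R) • m) (U ((s : R) • m) x))) := by
  let U (k : M) := lp.compEquiv ℂ (E := ℂ) (p := 2) ENNReal.ofNat_ne_top (shift (R := R) k)
  let S (r : R⁰) := lp.extendZero ℂ (E := ℂ) (p := 2) ENNReal.ofNat_ne_top
    (dilate_injective (M := M) r)
  have translate_add (a b : M) x : U a (U b x) = U (a + b) x := by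
    simp only [U, lp.compEquiv_compEquiv, shift_trans_shift]
  have translate_dilate (k : M) (r : R⁰) x : U k (S r x) = S r (U ((r : R) • k) x) :=
    lp.compEquiv_extendZero _ _ _ _ _ (shift_dilate k r) x
  refine ⟨U, S, fun _ _ _ _ => rfl, fun r x n t => lp.extendZero_apply_self _ _ x (n, t),
    fun r x n s hs => lp.extendZero_apply_of_notMem_range _ _ x (mt mem_range_dilate_iff.1 hs),
    fun m n r x => ?_, fun m r s h x => ?_⟩
  · rw [translate_dilate, translate_add, smul_add]
  · rw [translate_dilate, translate_add, ← add_smul]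
end

section
/- Let X = [-1, 1] ⊆ ℝ, let σ : X → X be σ(t) = t², and let f ∈ C(X, ℝ) be f(t) = t, so that f ∘ σ^n is the function t ↦ t^(2^n). Then the function t ↦ t³ does NOT belong to the topological closure in C([-1,1], ℝ) (supremum norm) of the ℝ-linear span of {1, t ↦ t} ∪ {t ↦ t^(2^n) : n ≥ 1}. In particular ⟨⟨f⟩⟩_σ is not closed under multiplication (it contains t but not t³ = t·t·t), so ⟨⟨f⟩⟩_σ is not a subalgebra of C(X). -/
/-- The squaring map `t ↦ t²` on `X = [-1, 1]`. -/
def sqMap : Set.Icc (-1 : ℝ) 1 → Set.Icc (-1 : ℝ) 1 := fun t =>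
  ⟨(t : ℝ) ^ 2, by
    obtain ⟨ht1, ht2⟩ := t.2
    constructor <;> nlinarith⟩

lemma sqMap_continuous : Continuous sqMap :=
  Continuous.subtype_mk (continuous_subtype_val.pow 2) _

/-- The monomial `t ↦ t^k` as an element of `C([-1,1], ℝ)`. -/
noncomputable def mono (k : ℕ) : C(Set.Icc (-1 : ℝ) 1, ℝ) :=
  ⟨fun t => (t : ℝ) ^ k, continuous_subtype_val.pow k⟩

/-- `⟨⟨f⟩⟩_σ`: the closure in `C(X, ℝ)` (sup-norm topology for compact `X`)
of the `ℝ`-linear span of `{1} ∪ {f ∘ σ^k : k ∈ ℕ}`. -/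
noncomputable def cyclicSpaceR {X : Type} [TopologicalSpace X] (σ : X → X) (hσ : Continuous σ)
    (f : C(X, ℝ)) : Set C(X, ℝ) :=
  closure (↑(Submodule.span ℝ ({1} ∪ Set.range fun k : ℕ =>
    (⟨fun x => f (σ^[k] x), f.continuous.comp (hσ.iterate k)⟩ : C(X, ℝ)))))

/-!
The functional `g ↦ (g 1 - g (-1)) - 2 (g (1/2) - g (-1/2))` is continuous for the sup norm.
It kills every even function, in particular `1` and all `t ^ 2 ^ n` with `n ≥ 1`, and it kills
`t` because the secant slopes of `t` over `[-1, 1]` and `[-1/2, 1/2]` agree. Hence it vanishes on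
the closed span, while on `t³` it takes the value `2 - 2 · (1/4) = 3/2`.
-/

lemma sqMap_iterate_coe (k : ℕ) (t : Set.Icc (-1 : ℝ) 1) :
    (sqMap^[k] t : ℝ) = (t : ℝ) ^ 2 ^ k := by
  induction k with
  | zero => simp
  | succ k ih => rw [Function.iterate_succ_apply', pow_succ, pow_mul, ← ih]; rfl

lemma mono_one_comp_sqMap_iterate (k : ℕ) :
    (⟨fun t => mono 1 (sqMap^[k] t), (mono 1).continuous.comp (sqMap_continuous.iterate k)⟩ :
      C(Set.Icc (-1 : ℝ) 1, ℝ)) = mono (2 ^ k) := by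
  ext t
  simp [mono, sqMap_iterate_coe]

def squaringGenerators : Set C(Set.Icc (-1 : ℝ) 1, ℝ) :=
  {1, mono 1} ∪ {g | ∃ n : ℕ, 1 ≤ n ∧ g = mono (2 ^ n)}

lemma cyclicSpaceR_sqMap_mono_one :
    cyclicSpaceR sqMap sqMap_continuous (mono 1) =
      closure (Submodule.span ℝ squaringGenerators : Set C(Set.Icc (-1 : ℝ) 1, ℝ)) := by
  simp only [cyclicSpaceR, mono_one_comp_sqMap_iterate, squaringGenerators]
  congr 3
  ext g
  simp only [Set.mem_union, Set.mem_singleton_iff, Set.mem_insert_iff, Set.mem_range,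
    Set.mem_ofPred_eq]
  constructor
  · rintro (rfl | ⟨_ | n, rfl⟩)
    · simp
    · simp
    · exact Or.inr ⟨n + 1, by omega, rfl⟩
  · rintro ((rfl | rfl) | ⟨n, -, rfl⟩)
    · simp
    · exact Or.inr ⟨0, rfl⟩
    · exact Or.inr ⟨n, rfl⟩

noncomputable def evalAt (x : ℝ) (hx : x ∈ Set.Icc (-1 : ℝ) 1) :
    C(Set.Icc (-1 : ℝ) 1, ℝ) →L[ℝ] ℝ :=
  ContinuousMap.evalCLM ℝ ⟨x, hx⟩

noncomputable def oddTest : C(Set.Icc (-1 : ℝ) 1, ℝ) →L[ℝ] ℝ :=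
  (evalAt 1 (by norm_num) - evalAt (-1) (by norm_num)) -
    (2 : ℝ) • (evalAt (1 / 2) (by norm_num) - evalAt (-(1 / 2)) (by norm_num))

lemma oddTest_one : oddTest 1 = 0 := by
  simp [oddTest, evalAt]

lemma oddTest_mono (k : ℕ) : oddTest (mono k) = (1 - (-1) ^ k) * (1 - 2 * (1 / 2) ^ k) := by
  simp only [oddTest, evalAt, mono, sub_apply, smul_apply, ContinuousMap.evalCLM_apply,
    ContinuousMap.coe_mk, smul_eq_mul]
  rw [neg_pow (1 / 2 : ℝ)]
  ring

lemma span_squaringGenerators_le_ker_oddTest :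
    Submodule.span ℝ squaringGenerators ≤
      LinearMap.ker (oddTest : C(Set.Icc (-1 : ℝ) 1, ℝ) →ₗ[ℝ] ℝ) := by
  rw [Submodule.span_le]
  rintro g ((rfl | rfl) | ⟨n, hn, rfl⟩)
  · exact oddTest_one
  · simp [oddTest_mono]
  · simp [oddTest_mono, (Nat.even_pow.mpr ⟨even_two, by omega⟩ : Even (2 ^ n)).neg_one_pow]

lemma mono_three_notMem_closure_span_squaringGenerators :
    mono 3 ∉ closure (Submodule.span ℝ squaringGenerators : Set C(Set.Icc (-1 : ℝ) 1, ℝ)) := by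
  intro h
  have h0 : oddTest (mono 3) = 0 :=
    closure_minimal span_squaringGenerators_le_ker_oddTest oddTest.isClosed_ker h
  norm_num [oddTest_mono] at h0

lemma mono_add (a b : ℕ) : mono (a + b) = mono a * mono b := by
  ext t
  exact pow_add _ a b

/-- For `X = [-1,1]`, `σ(t) = t²` and `f(t) = t` (so `f ∘ σ^n (t) = t^(2^n)`),
the function `t ↦ t³` does not belong to the sup-norm closure of the `ℝ`-linear span of
`{1, t ↦ t} ∪ {t ↦ t^(2^n) : n ≥ 1}`.  In particular `⟨⟨f⟩⟩_σ` contains `t` but not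
`t³ = t·t·t`, so it is not closed under multiplication and is not a subalgebra of `C(X)`. -/
theorem cube_not_in_cyclic_space_of_squaring :
    mono 3 ∉ closure (↑(Submodule.span ℝ
        ({1, mono 1} ∪ {g : C(Set.Icc (-1 : ℝ) 1, ℝ) | ∃ n : ℕ, 1 ≤ n ∧ g = mono (2 ^ n)}))
        : Set C(Set.Icc (-1 : ℝ) 1, ℝ)) ∧
    cyclicSpaceR sqMap sqMap_continuous (mono 1) =
      closure (↑(Submodule.span ℝ
        ({1, mono 1} ∪ {g : C(Set.Icc (-1 : ℝ) 1, ℝ) | ∃ n : ℕ, 1 ≤ n ∧ g = mono (2 ^ n)}))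
        : Set C(Set.Icc (-1 : ℝ) 1, ℝ)) ∧
    mono 1 ∈ cyclicSpaceR sqMap sqMap_continuous (mono 1) ∧
    mono 1 * mono 1 * mono 1 ∉ cyclicSpaceR sqMap sqMap_continuous (mono 1) ∧
    ¬ ∃ A : Subalgebra ℝ C(Set.Icc (-1 : ℝ) 1, ℝ),
        (A : Set C(Set.Icc (-1 : ℝ) 1, ℝ)) = cyclicSpaceR sqMap sqMap_continuous (mono 1) := by
  have hone : mono 1 ∈ cyclicSpaceR sqMap sqMap_continuous (mono 1) := by
    rw [cyclicSpaceR_sqMap_mono_one]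
    exact subset_closure (Submodule.subset_span (by simp [squaringGenerators]))
  have hcube : mono 1 * mono 1 * mono 1 ∉ cyclicSpaceR sqMap sqMap_continuous (mono 1) := by
    rw [← mono_add, ← mono_add, cyclicSpaceR_sqMap_mono_one]
    exact mono_three_notMem_closure_span_squaringGenerators
  refine ⟨mono_three_notMem_closure_span_squaringGenerators, cyclicSpaceR_sqMap_mono_one, hone,
    hcube, ?_⟩
  rintro ⟨A, hA⟩
  have hA_one : mono 1 ∈ A := by rwa [← SetLike.mem_coe, hA]
  exact hcube (hA ▸ mul_mem (mul_mem hA_one hA_one) hA_one)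
end

section
/- Let X and Y be compact Hausdorff spaces with continuous maps σ : X → X and τ : Y → Y, and let π : C(X, ℂ) → C(Y, ℂ) be a continuous surjective unital ℂ-algebra homomorphism satisfying π(f ∘ σ) = π(f) ∘ τ for all f ∈ C(X, ℂ). If there exist f₁, …, fₙ ∈ C(X, ℂ) with ⟨⟨f₁, …, fₙ⟩⟩_σ = C(X, ℂ), then ⟨⟨π(f₁), …, π(fₙ)⟩⟩_τ = C(Y, ℂ); in particular, if (X, σ) is finitely generated then so is (Y, τ). -/
/-- `⟨⟨f⟩⟩_σ`: the closure in `C(X, ℂ)` of the `ℂ`-linear span of `{1} ∪ {f ∘ σ^k : k ∈ ℕ}`. -/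
noncomputable def cyclicSpace {X : Type} [TopologicalSpace X] (σ : X → X) (hσ : Continuous σ)
    (f : C(X, ℂ)) : Set C(X, ℂ) :=
  closure (↑(Submodule.span ℂ ({1} ∪ Set.range fun k : ℕ =>
    (⟨fun x => f (σ^[k] x), f.continuous.comp (hσ.iterate k)⟩ : C(X, ℂ)))))

/-- `⟨⟨f₁, …, fₙ⟩⟩_σ`: the closure of the `ℂ`-linear span of all products `g₁ ⋯ gₙ`
with `gᵢ ∈ ⟨⟨fᵢ⟩⟩_σ`. -/
noncomputable def genSpace {X : Type} [TopologicalSpace X] (σ : X → X) (hσ : Continuous σ)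
    {n : ℕ} (f : Fin n → C(X, ℂ)) : Set C(X, ℂ) :=
  closure (↑(Submodule.span ℂ {g : C(X, ℂ) | ∃ gv : Fin n → C(X, ℂ),
    (∀ i, gv i ∈ cyclicSpace σ hσ (f i)) ∧ g = ∏ i, gv i}))

theorem Submodule.image_closure_span_subset {R M N : Type*} [Semiring R]
    [AddCommMonoid M] [Module R M] [TopologicalSpace M]
    [AddCommMonoid N] [Module R N] [TopologicalSpace N]
    (φ : M →ₗ[R] N) (hφ : Continuous φ) {s : Set M} {t : Set N} (hst : φ '' s ⊆ t) :
    φ '' closure (span R s) ⊆ closure (span R t) :=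
  (image_closure_subset_closure_image hφ).trans <| closure_mono <| by
    rw [← Submodule.map_coe, Submodule.map_span]
    exact Submodule.span_mono hst

theorem ContinuousMap.apply_comp_iterate_of_semiconj {X Y R S : Type*}
    [TopologicalSpace X] [TopologicalSpace Y] [TopologicalSpace R] [TopologicalSpace S]
    {σ : X → X} (hσ : Continuous σ) {τ : Y → Y} (hτ : Continuous τ) {π : C(X, R) → C(Y, S)}
    (hcov : ∀ f : C(X, R), π (f.comp ⟨σ, hσ⟩) = (π f).comp ⟨τ, hτ⟩) (g : C(X, R)) (k : ℕ) :
    π (g.comp ⟨σ^[k], hσ.iterate k⟩) = (π g).comp ⟨τ^[k], hτ.iterate k⟩ := by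
  induction k with
  | zero => rfl
  | succ k ih =>
    have hsplit : g.comp ⟨σ^[k + 1], hσ.iterate (k + 1)⟩
        = (g.comp ⟨σ^[k], hσ.iterate k⟩).comp ⟨σ, hσ⟩ := rfl
    rw [hsplit, hcov, ih]
    rfl

section Intertwining

variable {X Y : Type} [TopologicalSpace X] [TopologicalSpace Y]
  {σ : X → X} (hσ : Continuous σ) {τ : Y → Y} (hτ : Continuous τ)
  {π : C(X, ℂ) →ₐ[ℂ] C(Y, ℂ)} (hcont : Continuous π)
  (hcov : ∀ f : C(X, ℂ), π (f.comp ⟨σ, hσ⟩) = (π f).comp ⟨τ, hτ⟩)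
include hcont hcov

theorem image_cyclicSpace_subset (g : C(X, ℂ)) :
    π '' cyclicSpace σ hσ g ⊆ cyclicSpace τ hτ (π g) := by
  refine Submodule.image_closure_span_subset π.toLinearMap hcont ?_
  rintro _ ⟨h, hh | ⟨k, rfl⟩, rfl⟩
  · rw [Set.mem_singleton_iff.mp hh]
    exact Or.inl (map_one π)
  · exact Or.inr ⟨k, (ContinuousMap.apply_comp_iterate_of_semiconj hσ hτ hcov g k).symm⟩

theorem image_genSpace_subset {n : ℕ} (f : Fin n → C(X, ℂ)) :
    π '' genSpace σ hσ f ⊆ genSpace τ hτ (fun i => π (f i)) := by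
  refine Submodule.image_closure_span_subset π.toLinearMap hcont ?_
  rintro _ ⟨_, ⟨gv, hgv, rfl⟩, rfl⟩
  exact ⟨fun i => π (gv i), fun i => image_cyclicSpace_subset hσ hτ hcont hcov (f i)
    ⟨gv i, hgv i, rfl⟩, map_prod π gv Finset.univ⟩

end Intertwining

theorem quotient_of_finitely_generated_is_finitely_generated_general
    (X Y : Type) [TopologicalSpace X]
    [TopologicalSpace Y]
    (σ : X → X) (hσ : Continuous σ) (τ : Y → Y) (hτ : Continuous τ)
    (π : C(X, ℂ) →ₐ[ℂ] C(Y, ℂ)) (hcont : Continuous π) (hsurj : Function.Surjective π)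
    (hcov : ∀ f : C(X, ℂ), π (f.comp ⟨σ, hσ⟩) = (π f).comp ⟨τ, hτ⟩)
    (n : ℕ) (f : Fin n → C(X, ℂ)) (hgen : genSpace σ hσ f = Set.univ) :
    genSpace τ hτ (fun i => π (f i)) = Set.univ := by
  have hsub := image_genSpace_subset hσ hτ hcont hcov f
  rwa [hgen, Set.image_univ, hsurj.range_eq, Set.univ_subset_iff] at hsub

/-- If `π : C(X, ℂ) → C(Y, ℂ)` is a continuous surjective unital `ℂ`-algebra
homomorphism intertwining the actions of `σ` and `τ` (i.e. `π(f ∘ σ) = π(f) ∘ τ`), and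
`⟨⟨f₁, …, fₙ⟩⟩_σ = C(X, ℂ)`, then `⟨⟨π(f₁), …, π(fₙ)⟩⟩_τ = C(Y, ℂ)`; in particular if
`(X, σ)` is finitely generated then so is `(Y, τ)`. -/
theorem quotient_of_finitely_generated_is_finitely_generated
    (X Y : Type) [TopologicalSpace X] [CompactSpace X] [T2Space X]
    [TopologicalSpace Y] [CompactSpace Y] [T2Space Y]
    (σ : X → X) (hσ : Continuous σ) (τ : Y → Y) (hτ : Continuous τ)
    (π : C(X, ℂ) →ₐ[ℂ] C(Y, ℂ)) (hcont : Continuous π) (hsurj : Function.Surjective π)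
    (hcov : ∀ f : C(X, ℂ), π (f.comp ⟨σ, hσ⟩) = (π f).comp ⟨τ, hτ⟩)
    (n : ℕ) (f : Fin n → C(X, ℂ)) (hgen : genSpace σ hσ f = Set.univ) :
    genSpace τ hτ (fun i => π (f i)) = Set.univ :=
  quotient_of_finitely_generated_is_finitely_generated_general X Y σ hσ τ hτ π hcont hsurj hcov n f
    hgen
end
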